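/- arXiv:2304.13326 — 3 statements merged into one kernel-verified Lean document; each statement's English description precedes it below -/
import Mathlib

section
/- The sequence N_ν(n) = L(1/Q_n)^{−1/ν} satisfies N_ν(n)·L((ν·n)^{1/ν}/N_ν(n))^{1/ν} → 1 as n → ∞. -/
/-!
Write `f s = 1 - (1 - s) k(s)` with `k(s) = ∑ p_j (1 + s + ⋯ + s^(j-1))`. Condition [f_Λ] then reads
`L x / x^ν = 1 - k(1 - 1/x)`, and since `k` increases to the mean `1`, `L x / x^ν` decreases to `0`.
Together with [R_L] this forces `L` to converge to a positive limit `l`: along a geometric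
sequence `ρ^n x` the increments of `log L` are `O(L(ρ^n x) / (ρ^n x)^ν)`, which decay geometrically,
and the monotonicity of `L x / x^ν` controls `log L` between consecutive terms up to `ν log ρ`.
As `Q_n → 0`, `N_ν(n) → l^(-1/ν)`, the argument `(νn)^(1/ν) / N_ν(n)` tends to infinity, and the
product tends to `l^(-1/ν) l^(1/ν) = 1`.
-/

open Filter Topology Set Real

lemma summable_of_tsum_ne_zero {α β : Type*} [AddCommMonoid α] [TopologicalSpace α] {g : β → α}
    (h : ∑' j, g j ≠ 0) : Summable g := by
  by_contra hg
  exact h (tsum_eq_zero_of_not_summable hg)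

section pgfSlope

open Finset

/-- `(1 - f s) / (1 - s)` for the generating function `f` of `p`, in a form that makes sense
at `s = 1`, where it equals the mean `∑ j * p j`. -/
noncomputable def pgfSlope (p : ℕ → ℝ) (s : ℝ) : ℝ :=
  ∑' j, p j * ∑ i ∈ range j, s ^ i

variable {p : ℕ → ℝ} {s : ℝ}

lemma pgfSlope_term_nonneg (hp : ∀ j, 0 ≤ p j) (hs : 0 ≤ s) (j : ℕ) :
    0 ≤ p j * ∑ i ∈ range j, s ^ i :=
  mul_nonneg (hp j) (sum_nonneg fun i _ => pow_nonneg hs i)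

lemma pgfSlope_term_le (hp : ∀ j, 0 ≤ p j) (hs0 : 0 ≤ s) (hs1 : s ≤ 1) (j : ℕ) :
    p j * ∑ i ∈ range j, s ^ i ≤ j * p j := by
  rw [mul_comm (j : ℝ)]
  gcongr
  · exact hp j
  · simpa using sum_le_card_nsmul (range j) _ 1 fun i _ => pow_le_one₀ hs0 hs1

lemma summable_pgfSlope_term (hp : ∀ j, 0 ≤ p j) (hm : Summable fun j : ℕ => (j : ℝ) * p j)
    (hs0 : 0 ≤ s) (hs1 : s ≤ 1) : Summable fun j => p j * ∑ i ∈ range j, s ^ i :=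
  hm.of_nonneg_of_le (pgfSlope_term_nonneg hp hs0) (pgfSlope_term_le hp hs0 hs1)

lemma tsum_sub_tsum_mul_pow (hp : ∀ j, 0 ≤ p j) (hps : Summable p) (hs0 : 0 ≤ s) (hs1 : s ≤ 1) :
    ∑' j, p j - ∑' j, p j * s ^ j = (1 - s) * pgfSlope p s := by
  have hpow : Summable fun j => p j * s ^ j :=
    hps.of_nonneg_of_le (fun j => mul_nonneg (hp j) (pow_nonneg hs0 j))
      fun j => mul_le_of_le_one_right (hp j) (pow_le_one₀ hs0 hs1)
  rw [← hps.tsum_sub hpow, pgfSlope, ← tsum_mul_left]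
  refine tsum_congr fun j => ?_
  linear_combination p j * geom_sum_mul s j

lemma monotoneOn_pgfSlope (hp : ∀ j, 0 ≤ p j) (hm : Summable fun j : ℕ => (j : ℝ) * p j) :
    MonotoneOn (pgfSlope p) (Icc 0 1) := by
  intro s hs t ht hst
  refine (summable_pgfSlope_term hp hm hs.1 hs.2).tsum_le_tsum (fun j => ?_)
    (summable_pgfSlope_term hp hm ht.1 ht.2)
  gcongr with i
  exacts [hp j, hs.1]

lemma pgfSlope_pos (hp : ∀ j, 0 ≤ p j) (hm : Summable fun j : ℕ => (j : ℝ) * p j)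
    (hmean : ∑' j : ℕ, (j : ℝ) * p j ≠ 0) (hs0 : 0 ≤ s) (hs1 : s ≤ 1) : 0 < pgfSlope p s := by
  obtain ⟨j, hj⟩ : ∃ j : ℕ, (j : ℝ) * p j ≠ 0 := by
    by_contra! h
    exact hmean (by simp [h])
  have hj0 : j ≠ 0 := by rintro rfl; simp at hj
  have hpj : 0 < p j := (hp j).lt_of_ne' (right_ne_zero_of_mul hj)
  calc 0 < p j * 1 := by simpa using hpj
    _ ≤ p j * ∑ i ∈ range j, s ^ i := by
        gcongr
        simpa using single_le_sum (f := (s ^ ·)) (fun i _ => pow_nonneg hs0 i)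
          (mem_range.2 (Nat.pos_of_ne_zero hj0))
    _ ≤ pgfSlope p s :=
        (summable_pgfSlope_term hp hm hs0 hs1).le_tsum j fun i _ => pgfSlope_term_nonneg hp hs0 i

lemma tendsto_pgfSlope (hp : ∀ j, 0 ≤ p j) (hm : Summable fun j : ℕ => (j : ℝ) * p j) :
    Tendsto (pgfSlope p) (𝓝[<] 1) (𝓝 (∑' j : ℕ, (j : ℝ) * p j)) := by
  refine tendsto_tsum_of_dominated_convergence hm (fun j => ?_) ?_
  · have : Continuous fun s : ℝ => p j * ∑ i ∈ range j, s ^ i := by fun_prop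
    simpa [mul_comm] using (this.tendsto 1).mono_left nhdsWithin_le_nhds
  · filter_upwards [Ioo_mem_nhdsLT one_pos] with s hs j
    rw [Real.norm_of_nonneg (pgfSlope_term_nonneg hp hs.1.le j)]
    exact pgfSlope_term_le hp hs.1.le hs.2.le j

end pgfSlope

lemma abs_log_le_two_mul_abs_sub_one {t : ℝ} (ht : 1 / 2 ≤ t) : |log t| ≤ 2 * |t - 1| := by
  have ht0 : 0 < t := by linarith
  have hinv : t⁻¹ ≤ 2 := by rw [inv_le_comm₀ ht0 two_pos]; linarith
  have hlower : |1 - t⁻¹| ≤ 2 * |t - 1| := by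
    rw [show 1 - t⁻¹ = (t - 1) * t⁻¹ by field_simp, abs_mul, abs_of_pos (inv_pos.2 ht0)]
    nlinarith [abs_nonneg (t - 1)]
  rw [abs_le]
  constructor
  · linarith [neg_abs_le (1 - t⁻¹), one_sub_inv_le_log_of_pos ht0]
  · linarith [log_le_sub_one_of_pos ht0, le_abs_self (t - 1), abs_nonneg (t - 1)]

lemma abs_sub_iterate_le {α : Type*} {h b : α → ℝ} {T : α → α} {s : Set α} {r : ℝ}
    (hr0 : 0 ≤ r) (hr1 : r < 1) (hT : MapsTo T s s) (hh : ∀ x ∈ s, |h (T x) - h x| ≤ b x)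
    (hb : ∀ x ∈ s, b (T x) ≤ r * b x) {x : α} (hx : x ∈ s) (n : ℕ) :
    |h (T^[n] x) - h x| ≤ b x / (1 - r) := by
  have hbx : 0 ≤ b x := (abs_nonneg _).trans (hh x hx)
  have hgeom : ∀ k, b (T^[k] x) ≤ r ^ k * b x := by
    intro k
    induction k with
    | zero => simp
    | succ k ih =>
      rw [Function.iterate_succ_apply', pow_succ', mul_assoc]
      exact (hb _ (hT.iterate k hx)).trans (mul_le_mul_of_nonneg_left ih hr0)
  calc |h (T^[n] x) - h x| = dist (h (T^[0] x)) (h (T^[n] x)) := by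
        rw [dist_comm, Real.dist_eq, Function.iterate_zero_apply]
    _ ≤ ∑ k ∈ Finset.range n, r ^ k * b x :=
        dist_le_range_sum_of_dist_le (f := fun k => h (T^[k] x)) n fun {k} _ => by
        rw [dist_comm, Real.dist_eq, Function.iterate_succ_apply']
        exact (hh _ (hT.iterate k hx)).trans (hgeom k)
    _ = b x * ∑ k ∈ Finset.range n, r ^ k := by rw [← Finset.sum_mul, mul_comm]
    _ ≤ b x * (1 / (1 - r)) := by
        gcongr
        simpa using geom_sum_Ico_le_of_lt_one (m := 0) (n := n) hr0 hr1
    _ = b x / (1 - r) := by ring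

section PositiveLimit

variable {L : ℝ → ℝ} {ν : ℝ}

lemma log_le_log_add_of_antitoneOn (hL : ∀ x, 0 < x → 0 < L x) (hν : 0 ≤ ν)
    (hanti : AntitoneOn (fun x => L x / x ^ ν) (Ici 1)) {ρ x y : ℝ} (hx : 1 ≤ x) (hxy : x ≤ y)
    (hyρ : y ≤ ρ * x) : log (L y) ≤ log (L x) + ν * log ρ := by
  have hx0 : 0 < x := by linarith
  have hy0 : 0 < y := by linarith
  have hρ : 1 ≤ ρ := by nlinarith
  have hratio : L y / y ^ ν ≤ L x / x ^ ν := hanti hx (hx.trans hxy) hxy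
  have hLx := hL x hx0
  have hLy : L y ≤ L x * ρ ^ ν :=
    calc L y = L y / y ^ ν * y ^ ν := by field_simp
      _ ≤ L x / x ^ ν * (ρ * x) ^ ν := by gcongr
      _ = L x * ρ ^ ν := by rw [mul_rpow (by linarith) hx0.le]; field_simp
  calc log (L y) ≤ log (L x * ρ ^ ν) := log_le_log (hL y hy0) hLy
    _ = log (L x) + ν * log ρ := by
        rw [log_mul hLx.ne' (by positivity), log_rpow (by linarith)]

lemma exists_log_contraction (hν : 0 < ν) (hL : ∀ x, 0 < x → 0 < L x)
    (hg : Tendsto (fun x => L x / x ^ ν) atTop (𝓝 0)) {ρ : ℝ} (hρ : 1 < ρ)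
    (hR : (fun x => L (ρ * x) / L x - 1) =O[atTop] fun x => L x / x ^ ν) :
    ∃ C r, 0 ≤ C ∧ 0 ≤ r ∧ r < 1 ∧ ∀ᶠ x in atTop,
      |log (L (ρ * x)) - log (L x)| ≤ C * (L x / x ^ ν) ∧
        L (ρ * x) / (ρ * x) ^ ν ≤ r * (L x / x ^ ν) := by
  obtain ⟨c, hc0, hc⟩ := hR.exists_pos
  have hρν : 1 < ρ ^ ν := one_lt_rpow hρ hν
  obtain ⟨M, hM1, hMρ⟩ := exists_between hρν
  have hratio : Tendsto (fun x => L (ρ * x) / L x) atTop (𝓝 1) := by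
    simpa using (hR.trans_tendsto hg).add_const 1
  refine ⟨2 * c, M / ρ ^ ν, by positivity, by positivity,
    (div_lt_one (by positivity)).2 hMρ, ?_⟩
  filter_upwards [hc.bound, hratio.eventually (lt_mem_nhds (by norm_num : (1 : ℝ) / 2 < 1)),
    hratio.eventually (gt_mem_nhds hM1), eventually_gt_atTop 0]
    with x hbound hlo hhi hx
  have hLx := hL x hx
  have hg0 : 0 < L x / x ^ ν := by positivity
  constructor
  · rw [← log_div (hL _ (by positivity)).ne' hLx.ne']
    calc |log (L (ρ * x) / L x)| ≤ 2 * |L (ρ * x) / L x - 1| :=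
          abs_log_le_two_mul_abs_sub_one hlo.le
      _ ≤ 2 * (c * (L x / x ^ ν)) := by
          rw [Real.norm_eq_abs, Real.norm_of_nonneg hg0.le] at hbound
          linarith
      _ = 2 * c * (L x / x ^ ν) := by ring
  · calc L (ρ * x) / (ρ * x) ^ ν = L (ρ * x) / L x / ρ ^ ν * (L x / x ^ ν) := by
          rw [mul_rpow (by linarith) hx.le]; field_simp
      _ ≤ M / ρ ^ ν * (L x / x ^ ν) := by gcongr

lemma cauchySeq_log (hν : 0 < ν) (hL : ∀ x, 0 < x → 0 < L x)
    (hanti : AntitoneOn (fun x => L x / x ^ ν) (Ici 1))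
    (hg : Tendsto (fun x => L x / x ^ ν) atTop (𝓝 0))
    (hR : ∀ ρ, 1 < ρ → (fun x => L (ρ * x) / L x - 1) =O[atTop] fun x => L x / x ^ ν) :
    CauchySeq fun x => log (L x) := by
  rw [Metric.cauchySeq_iff']
  intro ε hε
  set ρ := exp (ε / (2 * ν))
  have hρ : 1 < ρ := one_lt_exp_iff.2 (by positivity)
  have hνρ : ν * log ρ = ε / 2 := by rw [log_exp]; field_simp
  obtain ⟨C, r, hC, hr0, hr1, hcontr⟩ := exists_log_contraction hν hL hg hρ (hR ρ hρ)
  obtain ⟨X₀, hX₀⟩ := eventually_atTop.1 (hcontr.and (eventually_ge_atTop 1))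
  have hchain : ∀ x, X₀ ≤ x → ∀ n : ℕ,
      |log (L (ρ ^ n * x)) - log (L x)| ≤ C * (L x / x ^ ν) / (1 - r) := by
    have hmaps : MapsTo (ρ * ·) (Ici X₀) (Ici X₀) := fun x (hx : X₀ ≤ x) =>
      hx.trans (le_mul_of_one_le_left (by linarith [(hX₀ x hx).2]) hρ.le)
    intro x hx n
    simpa [mul_left_iterate] using abs_sub_iterate_le (h := fun x => log (L x))
      (b := fun x => C * (L x / x ^ ν)) hr0 hr1 hmaps (fun x hx => (hX₀ x hx).1.1)
      (fun x hx => (mul_le_mul_of_nonneg_left (hX₀ x hx).1.2 hC).trans_eq (by ring)) hx n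
  have hsmall : Tendsto (fun x => C * (L x / x ^ ν) / (1 - r)) atTop (𝓝 0) := by
    simpa using (hg.const_mul C).div_const (1 - r)
  obtain ⟨X, hXε, hX⟩ :=
    ((hsmall.eventually (gt_mem_nhds (half_pos hε))).and (eventually_ge_atTop X₀)).exists
  have hX1 : 1 ≤ X := (hX₀ X hX).2
  refine ⟨X, fun y hy => ?_⟩
  obtain ⟨n, hn, hn1⟩ := exists_nat_pow_near ((one_le_div (by linarith)).2 hy) hρ
  rw [le_div_iff₀ (by linarith)] at hn
  rw [div_lt_iff₀ (by linarith)] at hn1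
  have hρn : 1 ≤ ρ ^ n * X := one_le_mul_of_one_le_of_one_le (one_le_pow₀ hρ.le) hX1
  have hupper := log_le_log_add_of_antitoneOn (ρ := ρ) hL hν.le hanti hρn hn
    (by rw [← mul_assoc, ← pow_succ']; exact hn1.le)
  have hlower := log_le_log_add_of_antitoneOn (ρ := ρ) hL hν.le hanti (hρn.trans hn) hn1.le
    (by rw [pow_succ', mul_assoc]; gcongr)
  have h₁ := abs_le.1 (hchain X hX n)
  have h₂ := abs_le.1 (hchain X hX (n + 1))
  rw [Real.dist_eq, abs_sub_lt_iff]
  constructor <;> linarith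

theorem exists_pos_tendsto_of_isBigO (hν : 0 < ν) (hL : ∀ x, 0 < x → 0 < L x)
    (hanti : AntitoneOn (fun x => L x / x ^ ν) (Ici 1))
    (hg : Tendsto (fun x => L x / x ^ ν) atTop (𝓝 0))
    (hR : ∀ ρ, 1 < ρ → (fun x => L (ρ * x) / L x - 1) =O[atTop] fun x => L x / x ^ ν) :
    ∃ l, 0 < l ∧ Tendsto L atTop (𝓝 l) := by
  obtain ⟨c, hc⟩ := cauchySeq_tendsto_of_complete (cauchySeq_log hν hL hanti hg hR)
  refine ⟨exp c, exp_pos c, ((continuous_exp.tendsto c).comp hc).congr' ?_⟩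
  filter_upwards [eventually_gt_atTop 0] with x hx using exp_log (hL x hx)

end PositiveLimit

lemma tendsto_iterate_nhdsLT_one {f k : ℝ → ℝ} (hk : ∀ s ∈ Ico 0 1, 1 - f s = (1 - s) * k s)
    (hmono : MonotoneOn k (Ico 0 1)) (hpos : ∀ s ∈ Ico 0 1, 0 < k s)
    (hlt : ∀ s ∈ Ico 0 1, k s < 1) : Tendsto (fun n => f^[n] 0) atTop (𝓝[<] 1) := by
  have hstep : ∀ s ∈ Ico 0 1, f s - s = (1 - s) * (1 - k s) := fun s hs => by
    linear_combination -hk s hs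
  have hle : ∀ s ∈ Ico 0 1, s ≤ f s := fun s hs => by
    nlinarith [hstep s hs, mul_nonneg (sub_nonneg.2 hs.2.le) (sub_nonneg.2 (hlt s hs).le)]
  have hmaps : MapsTo f (Ico 0 1) (Ico 0 1) := fun s hs =>
    ⟨hs.1.trans (hle s hs), by nlinarith [hk s hs, mul_pos (sub_pos.2 hs.2) (hpos s hs)]⟩
  set u : ℕ → ℝ := fun n => f^[n] 0
  have hu : ∀ n, u n ∈ Ico 0 1 := fun n => hmaps.iterate n ⟨le_rfl, one_pos⟩
  have hsucc : ∀ n, u (n + 1) = f (u n) := fun n => Function.iterate_succ_apply' f n 0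
  have hu_mono : Monotone u := monotone_nat_of_le_succ fun n => (hsucc n).symm ▸ hle _ (hu n)
  rw [tendsto_nhdsWithin_iff]
  refine ⟨tendsto_order.2 ⟨fun a ha => ?_, fun a ha => .of_forall fun n => (hu n).2.trans ha⟩,
    .of_forall fun n => (hu n).2⟩
  suffices ∃ n, a < u n by
    obtain ⟨n, hn⟩ := this
    exact eventually_atTop.2 ⟨n, fun m hm => hn.trans_le (hu_mono hm)⟩
  by_contra! hbelow
  -- below `σ` every step of the iteration gains at least `δ`
  set σ := max a 0
  have hσ : σ ∈ Ico 0 1 := ⟨le_max_right _ _, max_lt ha one_pos⟩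
  set δ := (1 - σ) * (1 - k σ)
  have hδ : 0 < δ := mul_pos (sub_pos.2 hσ.2) (sub_pos.2 (hlt σ hσ))
  have hgain : ∀ n : ℕ, n * δ ≤ u n := by
    intro n
    induction n with
    | zero => simpa using (hu 0).1
    | succ n ih =>
      have hσn : u n ≤ σ := (hbelow n).trans (le_max_left _ _)
      have : δ ≤ f (u n) - u n := by
        rw [hstep _ (hu n)]
        exact mul_le_mul (by linarith) (by linarith [hmono (hu n) hσ hσn])
          (sub_nonneg.2 (hlt σ hσ).le) (sub_nonneg.2 (hu n).2.le)
      push_cast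
      linarith [hsucc n]
  obtain ⟨n, hn⟩ := exists_nat_gt δ⁻¹
  linarith [hgain n, (hu n).2, (inv_lt_iff_one_lt_mul₀ hδ).1 hn]

lemma tendsto_rpow_neg_mul_rpow {ι : Type*} {F : Filter ι} {L : ℝ → ℝ} {l κ : ℝ} (hl : 0 < l)
    (hL : Tendsto L atTop (𝓝 l)) {a b : ι → ℝ} (ha : Tendsto a F atTop)
    (hb : Tendsto b F atTop) :
    Tendsto (fun n => L (a n) ^ (-κ) * L (b n / L (a n) ^ (-κ)) ^ κ) F (𝓝 1) := by
  have hN : Tendsto (fun n => L (a n) ^ (-κ)) F (𝓝 (l ^ (-κ))) :=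
    (hL.comp ha).rpow_const (Or.inl hl.ne')
  have hNpos : 0 < l ^ (-κ) := rpow_pos_of_pos hl _
  have hb' : Tendsto (fun n => b n / L (a n) ^ (-κ)) F atTop :=
    hb.atTop_mul_pos (inv_pos.2 hNpos) (hN.inv₀ hNpos.ne')
  have hprod := hN.mul ((hL.comp hb').rpow_const (p := κ) (Or.inl hl.ne'))
  rwa [← rpow_add hl, neg_add_cancel, rpow_zero] at hprod

lemma one_sub_one_div_mem_Ico {x : ℝ} (hx : 1 ≤ x) : 1 - 1 / x ∈ Ico (0 : ℝ) 1 :=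
  ⟨sub_nonneg.2 ((div_le_one (by linarith)).2 hx), sub_lt_self _ (one_div_pos.2 (by linarith))⟩

section GaltonWatson

variable {p : ℕ → ℝ} {f L : ℝ → ℝ} {ν : ℝ}

lemma one_sub_pgf_eq_mul_pgfSlope (hp_nonneg : ∀ j, 0 ≤ p j) (hp_sum : ∑' j : ℕ, p j = 1)
    (hf : ∀ s : ℝ, f s = ∑' j : ℕ, p j * s ^ j) {s : ℝ} (hs0 : 0 ≤ s) (hs1 : s ≤ 1) :
    1 - f s = (1 - s) * pgfSlope p s := by
  rw [hf, ← tsum_sub_tsum_mul_pow hp_nonneg (summable_of_tsum_ne_zero (by simp [hp_sum])) hs0 hs1,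
    hp_sum]

lemma div_rpow_eq_one_sub_pgfSlope (hp_nonneg : ∀ j, 0 ≤ p j) (hp_sum : ∑' j : ℕ, p j = 1)
    (hf : ∀ s : ℝ, f s = ∑' j : ℕ, p j * s ^ j)
    (hfΛ : ∀ s ∈ Ico (0 : ℝ) 1, f s - s = (1 - s) ^ (1 + ν) * L (1 / (1 - s)))
    {x : ℝ} (hx : 1 ≤ x) : L x / x ^ ν = 1 - pgfSlope p (1 - 1 / x) := by
  have hx0 : 0 < x := by linarith
  have hs := one_sub_one_div_mem_Ico hx
  have hΛ := hfΛ _ hs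
  have hk := one_sub_pgf_eq_mul_pgfSlope hp_nonneg hp_sum hf hs.1 hs.2.le
  rw [sub_sub_cancel, one_div_one_div, rpow_add (by positivity), rpow_one,
    div_rpow zero_le_one hx0.le, one_rpow] at hΛ
  rw [sub_sub_cancel] at hk
  have hxν : 0 < x ^ ν := by positivity
  field_simp at hΛ hk ⊢
  rw [← hΛ, ← hk]
  ring

lemma antitoneOn_div_rpow (hp_nonneg : ∀ j, 0 ≤ p j) (hp_sum : ∑' j : ℕ, p j = 1)
    (hp_mean : ∑' j : ℕ, (j : ℝ) * p j = 1) (hf : ∀ s : ℝ, f s = ∑' j : ℕ, p j * s ^ j)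
    (hfΛ : ∀ s ∈ Ico (0 : ℝ) 1, f s - s = (1 - s) ^ (1 + ν) * L (1 / (1 - s))) :
    AntitoneOn (fun x => L x / x ^ ν) (Ici 1) := by
  intro x (hx : 1 ≤ x) y (hy : 1 ≤ y) hxy
  have hmono := monotoneOn_pgfSlope hp_nonneg (summable_of_tsum_ne_zero (by simp [hp_mean]))
  have hle : 1 - 1 / x ≤ 1 - 1 / y := by gcongr
  simp only [div_rpow_eq_one_sub_pgfSlope hp_nonneg hp_sum hf hfΛ hx,
    div_rpow_eq_one_sub_pgfSlope hp_nonneg hp_sum hf hfΛ hy]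
  exact sub_le_sub_left (hmono (Ico_subset_Icc_self (one_sub_one_div_mem_Ico hx))
    (Ico_subset_Icc_self (one_sub_one_div_mem_Ico hy)) hle) 1

lemma tendsto_div_rpow_zero (hp_nonneg : ∀ j, 0 ≤ p j) (hp_sum : ∑' j : ℕ, p j = 1)
    (hp_mean : ∑' j : ℕ, (j : ℝ) * p j = 1) (hf : ∀ s : ℝ, f s = ∑' j : ℕ, p j * s ^ j)
    (hfΛ : ∀ s ∈ Ico (0 : ℝ) 1, f s - s = (1 - s) ^ (1 + ν) * L (1 / (1 - s))) :
    Tendsto (fun x => L x / x ^ ν) atTop (𝓝 0) := by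
  have hk := tendsto_pgfSlope hp_nonneg (summable_of_tsum_ne_zero (by simp [hp_mean]))
  rw [hp_mean] at hk
  have hs : Tendsto (fun x : ℝ => 1 - 1 / x) atTop (𝓝[<] 1) := by
    refine tendsto_nhdsWithin_iff.2 ⟨?_, ?_⟩
    · simpa using tendsto_const_nhds.sub (tendsto_inv_atTop_zero (𝕜 := ℝ))
    · filter_upwards [eventually_gt_atTop 0] with x hx
      exact sub_lt_self (1 : ℝ) (one_div_pos.2 hx)
  have hlim := (hk.comp hs).const_sub 1
  rw [sub_self] at hlim
  refine hlim.congr' ?_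
  filter_upwards [eventually_ge_atTop 1] with x hx
  exact (div_rpow_eq_one_sub_pgfSlope hp_nonneg hp_sum hf hfΛ hx).symm

lemma pgfSlope_lt_one (hp_nonneg : ∀ j, 0 ≤ p j) (hp_sum : ∑' j : ℕ, p j = 1)
    (hf : ∀ s : ℝ, f s = ∑' j : ℕ, p j * s ^ j)
    (hfΛ : ∀ s ∈ Ico (0 : ℝ) 1, f s - s = (1 - s) ^ (1 + ν) * L (1 / (1 - s)))
    (hLpos : ∀ x : ℝ, 0 < x → 0 < L x) {s : ℝ} (hs : s ∈ Ico (0 : ℝ) 1) :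
    pgfSlope p s < 1 := by
  have h1s : 0 < 1 - s := sub_pos.2 hs.2
  have h := div_rpow_eq_one_sub_pgfSlope hp_nonneg hp_sum hf hfΛ
    (x := 1 / (1 - s)) ((one_le_div h1s).2 (by linarith [hs.1]))
  rw [one_div_one_div, sub_sub_cancel] at h
  have hL := hLpos (1 / (1 - s)) (by positivity)
  have hg : 0 < L (1 / (1 - s)) / (1 / (1 - s)) ^ ν := by positivity
  linarith

end GaltonWatson

theorem stmt_7_general
    (p : ℕ → ℝ) (hp_nonneg : ∀ j, 0 ≤ p j)
    (hp_sum : ∑' j : ℕ, p j = 1) (hp_mean : ∑' j : ℕ, (j : ℝ) * p j = 1)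
    (f : ℝ → ℝ) (hf : ∀ s : ℝ, f s = ∑' j : ℕ, p j * s ^ j)
    (ν : ℝ) (hν : ν ∈ Set.Ioo (0 : ℝ) 1)
    (L : ℝ → ℝ) (hLpos : ∀ x : ℝ, 0 < x → 0 < L x)
    (hfΛ : ∀ s ∈ Set.Ico (0 : ℝ) 1,
      f s - s = (1 - s) ^ (1 + ν) * L (1 / (1 - s)))
    (hRL : ∀ l : ℝ, 0 < l →
      (fun x => L (l * x) / L x - 1) =O[Filter.atTop] (fun x => L x / x ^ ν))
    (Q : ℕ → ℝ) (hQ : ∀ n, Q n = 1 - f^[n] 0)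
    (N : ℕ → ℝ) (hN : ∀ n, N n = (L (1 / Q n)) ^ (-(1 / ν)))
    :
    Filter.Tendsto
      (fun n : ℕ => N n * (L ((ν * (n : ℝ)) ^ (1 / ν) / N n)) ^ (1 / ν))
      Filter.atTop (𝓝 1) := by
  obtain ⟨l, hl, hLl⟩ := exists_pos_tendsto_of_isBigO hν.1 hLpos
    (antitoneOn_div_rpow hp_nonneg hp_sum hp_mean hf hfΛ)
    (tendsto_div_rpow_zero hp_nonneg hp_sum hp_mean hf hfΛ) fun ρ hρ => hRL ρ (by linarith)
  have hm : Summable fun j : ℕ => (j : ℝ) * p j := summable_of_tsum_ne_zero (by simp [hp_mean])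
  have hiter := tendsto_nhdsWithin_iff.1 <| tendsto_iterate_nhdsLT_one (f := f)
    (fun s hs => one_sub_pgf_eq_mul_pgfSlope hp_nonneg hp_sum hf hs.1 hs.2.le)
    ((monotoneOn_pgfSlope hp_nonneg hm).mono Ico_subset_Icc_self)
    (fun s hs => pgfSlope_pos hp_nonneg hm (by simp [hp_mean]) hs.1 hs.2.le)
    (fun s hs => pgfSlope_lt_one hp_nonneg hp_sum hf hfΛ hLpos hs)
  have hQ_inv : Tendsto (fun n => 1 / Q n) atTop atTop := by
    simp only [hQ, one_div]
    refine Tendsto.inv_tendsto_nhdsGT_zero (tendsto_nhdsWithin_iff.2 ⟨?_, ?_⟩)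
    · simpa using (tendsto_const_nhds (x := (1 : ℝ))).sub hiter.1
    · filter_upwards [hiter.2] with n hn using sub_pos.2 (mem_Iio.1 hn)
  simp only [hN]
  exact tendsto_rpow_neg_mul_rpow hl hLl hQ_inv <| (tendsto_rpow_atTop (by simpa using hν.1)).comp
    (tendsto_natCast_atTop_atTop.const_mul_atTop hν.1)

theorem stmt_7
    (p : ℕ → ℝ) (hp_nonneg : ∀ j, 0 ≤ p j) (hp0 : 0 < p 0)
    (hp_sum : ∑' j : ℕ, p j = 1) (hp_mean : ∑' j : ℕ, (j : ℝ) * p j = 1)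
    (f : ℝ → ℝ) (hf : ∀ s : ℝ, f s = ∑' j : ℕ, p j * s ^ j)
    (ν : ℝ) (hν : ν ∈ Set.Ioo (0 : ℝ) 1)
    (L : ℝ → ℝ) (hLpos : ∀ x : ℝ, 0 < x → 0 < L x)
    (hSV : ∀ l : ℝ, 0 < l →
      Filter.Tendsto (fun x => L (l * x) / L x) Filter.atTop (𝓝 1))
    (hfΛ : ∀ s ∈ Set.Ico (0 : ℝ) 1,
      f s - s = (1 - s) ^ (1 + ν) * L (1 / (1 - s)))
    (Λ : ℝ → ℝ) (hΛ : ∀ y ∈ Set.Ioc (0 : ℝ) 1, Λ y = y ^ ν * L (1 / y))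
    (hRL : ∀ l : ℝ, 0 < l →
      (fun x => L (l * x) / L x - 1) =O[Filter.atTop] (fun x => L x / x ^ ν))
    (Q : ℕ → ℝ) (hQ : ∀ n, Q n = 1 - f^[n] 0)
    (N : ℕ → ℝ) (hN : ∀ n, N n = (L (1 / Q n)) ^ (-(1 / ν)))
    :
    Filter.Tendsto
      (fun n : ℕ => N n * (L ((ν * (n : ℝ)) ^ (1 / ν) / N n)) ^ (1 / ν))
      Filter.atTop (𝓝 1) :=
  stmt_7_general p hp_nonneg hp_sum hp_mean f hf ν hν L hLpos hfΛ hRL Q hQ N hN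
end

section
/- The function J(s) = (1 − f'(s))/Λ(1−s) − 1 satisfies J(s) → ν as s ↑ 1, i.e. ρ(s) := |ν − J(s)| → 0 as s ↑ 1. -/
open Filter Topology Asymptotics

/-!
Put `h(y) = f(1-y) - (1-y) = y^(1+ν) L(1/y)`. Slow variation of `L` makes `h` regularly varying
at `0⁺` with index `α = 1+ν`, and `h'(y) = 1 - f'(1-y)` is nondecreasing because `f'` is a power
series with nonnegative coefficients, so `h` is convex. By convexity, `y h'(y) / h(y)` lies
below `(h(cy)/h(y) - 1)/(c-1)` for `c > 1` and above it for `c < 1`; these bounds tend to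
`(c^α - 1)/(c - 1)`, which tends to `α` as `c → 1` (the monotone density theorem). Hence
`y h'(y) / h(y) → 1 + ν`, and `y h'(y) / h(y) = (1 - f'(1-y)) / Λ(y)`.
-/

open Set

def SlowlyVarying (L : ℝ → ℝ) : Prop :=
  ∀ l : ℝ, 0 < l → Tendsto (fun x => L (l * x) / L x) atTop (𝓝 1)

def RegularlyVaryingAtZero (h : ℝ → ℝ) (α : ℝ) : Prop :=
  ∀ c : ℝ, 0 < c → Tendsto (fun y => h (c * y) / h y) (𝓝[>] 0) (𝓝 (c ^ α))

lemma tendsto_const_mul_nhdsGT_zero {c : ℝ} (hc : 0 < c) :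
    Tendsto (c * ·) (𝓝[>] (0 : ℝ)) (𝓝[>] 0) :=
  tendsto_iff_comap.2 (comap_mulLeft_nhdsGT_zero hc).ge

lemma RegularlyVaryingAtZero.congr {g h : ℝ → ℝ} {α : ℝ} (hg : RegularlyVaryingAtZero g α)
    (hgh : g =ᶠ[𝓝[>] 0] h) : RegularlyVaryingAtZero h α := fun c hc =>
  (hg c hc).congr' <| (hgh.comp_tendsto (tendsto_const_mul_nhdsGT_zero hc)).div hgh

lemma SlowlyVarying.regularlyVaryingAtZero_rpow_mul {L : ℝ → ℝ} (hL : SlowlyVarying L)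
    (hLpos : ∀ x : ℝ, 0 < x → 0 < L x) (α : ℝ) :
    RegularlyVaryingAtZero (fun y => y ^ α * L (1 / y)) α := by
  intro c hc
  have hinv : Tendsto (fun y : ℝ => 1 / y) (𝓝[>] 0) atTop := by
    simpa only [one_div] using tendsto_inv_nhdsGT_zero (𝕜 := ℝ)
  have hL' : Tendsto (fun y : ℝ => c ^ α * (L (c⁻¹ * (1 / y)) / L (1 / y))) (𝓝[>] 0)
      (𝓝 (c ^ α * 1)) :=
    ((hL c⁻¹ (inv_pos.2 hc)).comp hinv).const_mul _
  rw [mul_one] at hL'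
  refine hL'.congr' ?_
  filter_upwards [self_mem_nhdsWithin] with y (hy : 0 < y)
  have : 0 < L (1 / y) := hLpos _ (by positivity)
  have : 0 < y ^ α := Real.rpow_pos_of_pos hy α
  rw [Real.mul_rpow hc.le hy.le, show 1 / (c * y) = c⁻¹ * (1 / y) by field_simp]
  field_simp

lemma div_sub_one_div_sub_one_eq_mul_slope (h : ℝ → ℝ) {y c : ℝ} (hy : y ≠ 0) (hhy : h y ≠ 0)
    (hc : c ≠ 1) : (h (c * y) / h y - 1) / (c - 1) = y * slope h y (c * y) / h y := by
  have : c * y - y ≠ 0 := by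
    rw [← sub_one_mul]; exact mul_ne_zero (sub_ne_zero.2 hc) hy
  have : c - 1 ≠ 0 := sub_ne_zero.2 hc
  rw [slope_def_field]
  field_simp

lemma tendsto_slope_rpow_one (α : ℝ) : Tendsto (slope (· ^ α) 1) (𝓝[≠] (1 : ℝ)) (𝓝 α) := by
  have h := Real.hasDerivAt_rpow_const (x := 1) (p := α) (Or.inl one_ne_zero)
  rwa [Real.one_rpow, mul_one, hasDerivAt_iff_tendsto_slope] at h

theorem RegularlyVaryingAtZero.tendsto_mul_deriv_div {h D : ℝ → ℝ} {α δ : ℝ}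
    (hreg : RegularlyVaryingAtZero h α) (hδ : 0 < δ)
    (hD : ∀ y ∈ Ioo 0 δ, HasDerivAt h (D y) y) (hmono : MonotoneOn D (Ioo 0 δ))
    (hpos : ∀ y ∈ Ioo 0 δ, 0 < h y) :
    Tendsto (fun y => y * D y / h y) (𝓝[>] 0) (𝓝 α) := by
  have hconv : ConvexOn ℝ (Ioo 0 δ) h := by
    refine MonotoneOn.convexOn_of_deriv (convex_Ioo 0 δ)
      (fun y hy => (hD y hy).continuousAt.continuousWithinAt) ?_ ?_ <;> rw [interior_Ioo]
    · exact fun y hy => (hD y hy).differentiableAt.differentiableWithinAt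
    · exact hmono.congr fun y hy => (hD y hy).deriv.symm
  have hquot : ∀ c, 0 < c → Tendsto (fun y => (h (c * y) / h y - 1) / (c - 1)) (𝓝[>] 0)
      (𝓝 (slope (· ^ α) 1 c)) := fun c hc => by
    rw [slope_def_field, Real.one_rpow]
    exact ((hreg c hc).sub_const 1).div_const _
  have hmem : ∀ c, 0 < c → ∀ᶠ y in 𝓝[>] 0, y ∈ Ioo 0 δ ∧ c * y ∈ Ioo 0 δ := fun c hc => by
    have hδ' : ∀ᶠ y in 𝓝[>] 0, y ∈ Ioo 0 δ := Ioo_mem_nhdsGT hδ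
    exact hδ'.and (tendsto_const_mul_nhdsGT_zero hc hδ')
  rw [tendsto_order]
  refine ⟨fun a ha => ?_, fun a ha => ?_⟩
  · obtain ⟨c, hca, hc0, hc1⟩ := (((tendsto_slope_rpow_one α).mono_left
      (nhdsLT_le_nhdsNE 1)).eventually (lt_mem_nhds ha)).and (Ioo_mem_nhdsLT zero_lt_one) |>.exists
    filter_upwards [(hquot c hc0).eventually (lt_mem_nhds hca), hmem c hc0]
      with y hlt ⟨hy, hcy⟩
    have hslope : slope h (c * y) y ≤ D y :=
      hconv.slope_le_of_hasDerivAt hcy hy (by nlinarith [hy.1]) (hD y hy)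
    refine hlt.trans_le ?_
    rw [div_sub_one_div_sub_one_eq_mul_slope h hy.1.ne' (hpos y hy).ne' hc1.ne, slope_comm]
    have := hpos y hy
    have := hy.1
    gcongr
  · obtain ⟨c, hca, hc1⟩ := (((tendsto_slope_rpow_one α).mono_left
      (nhdsGT_le_nhdsNE 1)).eventually (gt_mem_nhds ha)).and self_mem_nhdsWithin |>.exists
    have hc0 : (0 : ℝ) < c := zero_lt_one.trans hc1
    filter_upwards [(hquot c hc0).eventually (gt_mem_nhds hca), hmem c hc0]
      with y hgt ⟨hy, hcy⟩
    have hslope : D y ≤ slope h y (c * y) :=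
      hconv.le_slope_of_hasDerivAt hy hcy (by nlinarith [hy.1, show (1 : ℝ) < c from hc1])
        (hD y hy)
    refine lt_of_le_of_lt ?_ hgt
    rw [div_sub_one_div_sub_one_eq_mul_slope h hy.1.ne' (hpos y hy).ne' (ne_of_gt hc1)]
    have := hpos y hy
    have := hy.1
    gcongr

section PowerSeries

variable {p : ℕ → ℝ} (hp : ∀ j, 0 ≤ p j) (hs : Summable fun j : ℕ => (j : ℝ) * p j)
include hp

lemma norm_mul_natCast_mul_pow_pred_le (j : ℕ) {x : ℝ} (hx : x ∈ Icc (-1) 1) :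
    ‖p j * (j * x ^ (j - 1))‖ ≤ j * p j := by
  rw [norm_mul, norm_mul, Real.norm_of_nonneg (hp j), RCLike.norm_natCast, norm_pow]
  have : ‖x‖ ^ (j - 1) ≤ 1 := pow_le_one₀ (norm_nonneg x) (abs_le.2 hx)
  have := hp j
  calc p j * (j * ‖x‖ ^ (j - 1)) ≤ p j * (j * 1) := by gcongr
    _ = j * p j := by ring

include hs

lemma hasDerivAt_tsum_mul_pow {x : ℝ} (hx : x ∈ Ioo (-1) 1) :
    HasDerivAt (fun z => ∑' j, p j * z ^ j) (∑' j, p j * (j * x ^ (j - 1))) x := by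
  refine hasDerivAt_tsum_of_isPreconnected hs isOpen_Ioo (convex_Ioo _ _).isPreconnected
    (fun j y _ => (hasDerivAt_pow j y).const_mul (p j))
    (fun j y hy => norm_mul_natCast_mul_pow_pred_le hp j (Ioo_subset_Icc_self hy))
    (show (0 : ℝ) ∈ Ioo (-1) 1 by norm_num) ?_ hx
  exact (summable_nat_add_iff 1).1 (by simp)

lemma monotoneOn_tsum_mul_natCast_mul_pow_pred :
    MonotoneOn (fun x => ∑' j, p j * (j * x ^ (j - 1))) (Icc 0 1) := by
  intro x hx y hy hxy
  have hsum : ∀ z ∈ Icc (0 : ℝ) 1, Summable fun j : ℕ => p j * (j * z ^ (j - 1)) := fun z hz =>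
    .of_norm_bounded hs fun j => norm_mul_natCast_mul_pow_pred_le hp j ⟨by linarith [hz.1], hz.2⟩
  refine (hsum x hx).tsum_le_tsum (fun j => ?_) (hsum y hy)
  have := hp j
  have := hx.1
  gcongr

lemma monotoneOn_deriv_tsum_mul_pow :
    MonotoneOn (deriv fun z => ∑' j, p j * z ^ j) (Ico 0 1) := fun x hx y hy hxy => by
  rw [(hasDerivAt_tsum_mul_pow hp hs ⟨by linarith [hx.1], hx.2⟩).deriv,
    (hasDerivAt_tsum_mul_pow hp hs ⟨by linarith [hy.1], hy.2⟩).deriv]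
  exact monotoneOn_tsum_mul_natCast_mul_pow_pred hp hs (Ico_subset_Icc_self hx)
    (Ico_subset_Icc_self hy) hxy

end PowerSeries

lemma hasDerivAt_comp_one_sub_sub_one_sub {f : ℝ → ℝ} {f' y : ℝ} (hf : HasDerivAt f f' (1 - y)) :
    HasDerivAt (fun y => f (1 - y) - (1 - y)) (1 - f') y := by
  have hsub : HasDerivAt (fun z : ℝ => 1 - z) (-1) y := by
    simpa using (hasDerivAt_id y).const_sub 1
  have := (hf.comp y hsub).sub hsub
  rwa [show f' * -1 - -1 = 1 - f' by ring] at this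

lemma tendsto_one_sub_nhdsLT_one : Tendsto (1 - ·) (𝓝[<] (1 : ℝ)) (𝓝[>] 0) := by
  refine tendsto_nhdsWithin_iff.2
    ⟨?_, eventually_mem_nhdsWithin.mono fun s (hs : s < 1) => sub_pos.2 hs⟩
  have : Tendsto (fun s : ℝ => 1 - s) (𝓝 1) (𝓝 0) := by
    simpa using (tendsto_id (x := 𝓝 (1 : ℝ))).const_sub 1
  exact this.mono_left nhdsWithin_le_nhds

theorem stmt_9_general
    (p : ℕ → ℝ) (hp_nonneg : ∀ j, 0 ≤ p j)
    (hp_mean : ∑' j : ℕ, (j : ℝ) * p j = 1)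
    (f : ℝ → ℝ) (hf : ∀ s : ℝ, f s = ∑' j : ℕ, p j * s ^ j)
    (ν : ℝ)
    (L : ℝ → ℝ) (hLpos : ∀ x : ℝ, 0 < x → 0 < L x)
    (hSV : ∀ l : ℝ, 0 < l →
      Filter.Tendsto (fun x => L (l * x) / L x) Filter.atTop (𝓝 1))
    (hfΛ : ∀ s ∈ Set.Ico (0 : ℝ) 1,
      f s - s = (1 - s) ^ (1 + ν) * L (1 / (1 - s)))
    (Λ : ℝ → ℝ) (hΛ : ∀ y ∈ Set.Ioc (0 : ℝ) 1, Λ y = y ^ ν * L (1 / y))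
    (J : ℝ → ℝ) (hJ : ∀ s : ℝ, J s = (1 - deriv f s) / Λ (1 - s) - 1)
    :
    Filter.Tendsto J (nhdsWithin 1 (Set.Ico (0 : ℝ) 1)) (𝓝 ν) := by
  have hs : Summable fun j : ℕ => (j : ℝ) * p j := by
    by_contra hns
    simp [tsum_eq_zero_of_not_summable hns] at hp_mean
  have hfeq : f = fun z => ∑' j, p j * z ^ j := funext hf
  set h : ℝ → ℝ := fun y => f (1 - y) - (1 - y)
  have hD : ∀ y ∈ Ioo (0 : ℝ) 1, HasDerivAt h (1 - deriv f (1 - y)) y := fun y ⟨hy0, hy1⟩ =>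
    hasDerivAt_comp_one_sub_sub_one_sub (hfeq ▸ hasDerivAt_tsum_mul_pow hp_nonneg hs
      ⟨by linarith, by linarith⟩).differentiableAt.hasDerivAt
  have hmono : MonotoneOn (fun y => 1 - deriv f (1 - y)) (Ioo 0 1) :=
    fun y ⟨_, hy1⟩ z ⟨hz0, _⟩ hyz => sub_le_sub_left ((hfeq ▸ monotoneOn_deriv_tsum_mul_pow
      hp_nonneg hs) ⟨by linarith, by linarith⟩ ⟨by linarith, by linarith⟩ (by linarith)) 1
  have hform : ∀ y ∈ Ioc (0 : ℝ) 1, h y = y ^ (1 + ν) * L (1 / y) := fun y ⟨hy0, hy1⟩ => by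
    simpa using hfΛ (1 - y) ⟨by linarith, by linarith⟩
  have hreg : RegularlyVaryingAtZero h (1 + ν) :=
    (SlowlyVarying.regularlyVaryingAtZero_rpow_mul hSV hLpos _).congr <| by
      filter_upwards [Ioc_mem_nhdsGT one_pos] with y hy using (hform y hy).symm
  have hpos : ∀ y ∈ Ioo (0 : ℝ) 1, 0 < h y := fun y hy => by
    rw [hform y (Ioo_subset_Ioc_self hy)]
    exact mul_pos (Real.rpow_pos_of_pos hy.1 _) (hLpos _ (one_div_pos.2 hy.1))
  have hlim := ((hreg.tendsto_mul_deriv_div one_pos hD hmono hpos).comp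
    (tendsto_one_sub_nhdsLT_one.mono_left
      (nhdsWithin_mono 1 (Ico_subset_Iio_self (a := 0))))).sub_const 1
  rw [add_sub_cancel_left] at hlim
  refine hlim.congr' ?_
  filter_upwards [self_mem_nhdsWithin] with s ⟨hs0, hs1⟩
  have hy : 1 - s ∈ Ioc (0 : ℝ) 1 := ⟨by linarith, by linarith⟩
  have := Real.rpow_pos_of_pos hy.1 ν
  have := hLpos _ (one_div_pos.2 hy.1)
  simp only [Function.comp_apply, hJ, hΛ _ hy, hform _ hy, sub_sub_cancel,
    Real.rpow_add hy.1, Real.rpow_one]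
  field_simp

theorem stmt_9
    (p : ℕ → ℝ) (hp_nonneg : ∀ j, 0 ≤ p j) (hp0 : 0 < p 0)
    (hp_sum : ∑' j : ℕ, p j = 1) (hp_mean : ∑' j : ℕ, (j : ℝ) * p j = 1)
    (f : ℝ → ℝ) (hf : ∀ s : ℝ, f s = ∑' j : ℕ, p j * s ^ j)
    (ν : ℝ) (hν : ν ∈ Set.Ioo (0 : ℝ) 1)
    (L : ℝ → ℝ) (hLpos : ∀ x : ℝ, 0 < x → 0 < L x)
    (hSV : ∀ l : ℝ, 0 < l →
      Filter.Tendsto (fun x => L (l * x) / L x) Filter.atTop (𝓝 1))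
    (hfΛ : ∀ s ∈ Set.Ico (0 : ℝ) 1,
      f s - s = (1 - s) ^ (1 + ν) * L (1 / (1 - s)))
    (Λ : ℝ → ℝ) (hΛ : ∀ y ∈ Set.Ioc (0 : ℝ) 1, Λ y = y ^ ν * L (1 / y))
    (J : ℝ → ℝ) (hJ : ∀ s : ℝ, J s = (1 - deriv f s) / Λ (1 - s) - 1)
    :
    Filter.Tendsto J (nhdsWithin 1 (Set.Ico (0 : ℝ) 1)) (𝓝 ν) :=
  stmt_9_general p hp_nonneg hp_mean f hf ν L hLpos hSV hfΛ Λ hΛ J hJ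
end

section
/- Let ν ∈ (0,1) and let L : (0,∞) → (0,∞) be continuous and slowly varying at infinity. Then the following are equivalent: (i) for every λ > 0, L(λx)/L(x) − 1 = O(L(x)/x^ν) as x → ∞; (ii) there exists a constant C_L ∈ (0,∞) such that L(x) = C_L + O(x^{−ν}) as x → ∞ (in particular L(x) → C_L as x → ∞). -/
/-!
Put `h x = L x / x ^ ν`. Taking `λ = 2` in (i), `|log L (2x) - log L x| ≲ h x`, while slow
variation gives `h (2x) ≤ s h x` with `s < 1` for large `x`. So along every doubling sequence
`2ⁿ y` the increments of `log L` decay geometrically and `log L (2ⁿ y)` converges; slow variation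
forces all these limits to be one constant `c`, with `|log L y - c| ≲ h y`. Continuity bounds `h`
on one dyadic block `[X, 2X]`, hence on `[X, ∞)`; then `L` is bounded, `h y = O(y ^ (-ν))`, and
`L → exp c` at that rate. Conversely (ii) gives `L (λx) - L x = O(x ^ (-ν))`, and dividing by
`L x → C > 0` yields (i).
-/

open Filter Topology Asymptotics

section Doubling

variable {f φ : ℝ → ℝ} {s X : ℝ}

lemma le_two_pow_mul_of_le (hX : 0 ≤ X) {y : ℝ} (hy : X ≤ y) (n : ℕ) : X ≤ 2 ^ n * y :=
  hy.trans (le_mul_of_one_le_left (hX.trans hy) (one_le_pow₀ one_le_two))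

lemma le_pow_mul_of_doubling (hX : 0 ≤ X) (hs : 0 ≤ s) (hφ : ∀ x, X ≤ x → φ (2 * x) ≤ s * φ x)
    {y : ℝ} (hy : X ≤ y) (n : ℕ) : φ (2 ^ n * y) ≤ s ^ n * φ y := by
  induction n with
  | zero => simp
  | succ n ih =>
    calc φ (2 ^ (n + 1) * y) = φ (2 * (2 ^ n * y)) := by ring_nf
      _ ≤ s * φ (2 ^ n * y) := hφ _ (le_two_pow_mul_of_le hX hy n)
      _ ≤ s * (s ^ n * φ y) := mul_le_mul_of_nonneg_left ih hs
      _ = s ^ (n + 1) * φ y := by ring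

lemma le_of_doubling_of_le_on_Icc (hX : 0 < X) (hs0 : 0 ≤ s) (hs1 : s ≤ 1) {M : ℝ} (hM : 0 ≤ M)
    (hφ : ∀ x, X ≤ x → φ (2 * x) ≤ s * φ x) (hbase : ∀ x ∈ Set.Icc X (2 * X), φ x ≤ M)
    {x : ℝ} (hx : X ≤ x) : φ x ≤ M := by
  have key : ∀ n : ℕ, ∀ x ∈ Set.Icc X (2 ^ (n + 1) * X), φ x ≤ M := by
    intro n
    induction n with
    | zero => simpa using hbase
    | succ n ih =>
      rintro x ⟨hXx, hx⟩
      rcases le_or_gt x (2 * X) with hx2 | hx2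
      · exact hbase x ⟨hXx, hx2⟩
      calc φ x = φ (2 * (x / 2)) := by ring_nf
        _ ≤ s * φ (x / 2) := hφ _ (by linarith)
        _ ≤ s * M :=
          mul_le_mul_of_nonneg_left (ih _ ⟨by linarith, by rw [pow_succ] at hx; linarith⟩) hs0
        _ ≤ M := mul_le_of_le_one_left hM hs1
  obtain ⟨n, hn⟩ := pow_unbounded_of_one_lt (x / X) one_lt_two
  refine key n x ⟨hx, ?_⟩
  rw [div_lt_iff₀ hX] at hn
  rw [pow_succ]
  nlinarith [pow_pos (two_pos (α := ℝ)) n]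

lemma exists_tendsto_of_doubling (hX : 0 ≤ X) (hs0 : 0 ≤ s) (hs1 : s < 1)
    (hf : ∀ x, X ≤ x → |f (2 * x) - f x| ≤ φ x) (hφ : ∀ x, X ≤ x → φ (2 * x) ≤ s * φ x)
    {y : ℝ} (hy : X ≤ y) :
    ∃ ℓ, Tendsto (fun n : ℕ => f (2 ^ n * y)) atTop (𝓝 ℓ) ∧ |f y - ℓ| ≤ φ y / (1 - s) := by
  have hstep : ∀ n : ℕ, dist (f (2 ^ n * y)) (f (2 ^ (n + 1) * y)) ≤ φ y * s ^ n := by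
    intro n
    rw [dist_comm, Real.dist_eq, pow_succ', mul_assoc, mul_comm (φ y)]
    exact (hf _ (le_two_pow_mul_of_le hX hy n)).trans
      (le_pow_mul_of_doubling hX hs0 hφ hy n)
  obtain ⟨ℓ, hℓ⟩ := cauchySeq_tendsto_of_complete (cauchySeq_of_le_geometric s (φ y) hs1 hstep)
  refine ⟨ℓ, hℓ, ?_⟩
  simpa [Real.dist_eq] using dist_le_of_le_geometric_of_tendsto₀ s (φ y) hs1 hstep hℓ

lemma exists_abs_sub_le_of_doubling (hX : 0 < X) (hs0 : 0 ≤ s) (hs1 : s < 1)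
    (hf : ∀ x, X ≤ x → |f (2 * x) - f x| ≤ φ x) (hφ : ∀ x, X ≤ x → φ (2 * x) ≤ s * φ x)
    (hSV : ∀ l, 0 < l → Tendsto (fun x => f (l * x) - f x) atTop (𝓝 0)) :
    ∃ c, ∀ y, X ≤ y → |f y - c| ≤ φ y / (1 - s) := by
  obtain ⟨c, hc, -⟩ := exists_tendsto_of_doubling hX.le hs0 hs1 hf hφ le_rfl
  refine ⟨c, fun y hy => ?_⟩
  obtain ⟨ℓ, hℓ, hbound⟩ := exists_tendsto_of_doubling hX.le hs0 hs1 hf hφ hy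
  have h2n : Tendsto (fun n : ℕ => (2 : ℝ) ^ n * X) atTop atTop :=
    (tendsto_pow_atTop_atTop_of_one_lt one_lt_two).atTop_mul_const hX
  have hc' : Tendsto (fun n : ℕ => f (2 ^ n * y)) atTop (𝓝 c) := by
    have := ((hSV (y / X) (div_pos (hX.trans_le hy) hX)).comp h2n).add hc
    rw [zero_add] at this
    refine this.congr fun n => ?_
    simp only [Function.comp_apply, sub_add_cancel]
    congr 1
    field_simp
  rwa [tendsto_nhds_unique hℓ hc'] at hbound

end Doubling

lemma abs_log_le_two_mul_abs_sub_one_s11 {r : ℝ} (hr : 1 / 2 ≤ r) : |Real.log r| ≤ 2 * |r - 1| := by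
  have hr0 : 0 < r := by linarith
  rw [abs_le]
  constructor
  · have h := Real.one_sub_inv_le_log_of_pos hr0
    have : 1 - r⁻¹ = (r - 1) / r := by field_simp
    rw [this] at h
    have : -(2 * |r - 1|) ≤ (r - 1) / r := by
      rw [le_div_iff₀ hr0]
      cases abs_cases (r - 1) <;> nlinarith
    linarith
  · linarith [Real.log_le_sub_one_of_pos hr0, le_abs_self (r - 1), abs_nonneg (r - 1)]

section SlowlyVarying

variable {ν : ℝ} {L : ℝ → ℝ}

lemma tendsto_log_comp_mul_sub_log (hLpos : ∀ x, 0 < x → 0 < L x) {l : ℝ} (hl : 0 < l)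
    (hSV : Tendsto (fun x => L (l * x) / L x) atTop (𝓝 1)) :
    Tendsto (fun x => Real.log (L (l * x)) - Real.log (L x)) atTop (𝓝 0) := by
  have := hSV.log one_ne_zero
  rw [Real.log_one] at this
  refine this.congr' ?_
  filter_upwards [eventually_gt_atTop 0] with x hx
  rw [Real.log_div (hLpos _ (mul_pos hl hx)).ne' (hLpos x hx).ne']

lemma exists_doubling_bounds (hν : 0 < ν) (hLpos : ∀ x, 0 < x → 0 < L x)
    (hSV : Tendsto (fun x => L (2 * x) / L x) atTop (𝓝 1))
    (hO : (fun x => L (2 * x) / L x - 1) =O[atTop] (fun x => L x / x ^ ν)) :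
    ∃ X > 0, ∃ K ≥ 0, ∃ s, 0 ≤ s ∧ s < 1 ∧ ∀ x, X ≤ x →
      L (2 * x) / (2 * x) ^ ν ≤ s * (L x / x ^ ν) ∧
      |Real.log (L (2 * x)) - Real.log (L x)| ≤ K * (L x / x ^ ν) := by
  set q : ℝ := 2 ^ (-ν) with hq
  have hq0 : 0 < q := by positivity
  have hq1 : q < 1 := Real.rpow_lt_one_of_one_lt_of_neg one_lt_two (neg_neg_of_pos hν)
  obtain ⟨s, hqs, hs1⟩ := exists_between hq1
  obtain ⟨K, hK0, hK⟩ := hO.exists_pos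
  obtain ⟨X, hX⟩ := eventually_atTop.1 <| hK.bound.and <|
    (hSV.eventually_le_const ((one_lt_div hq0).2 hqs : 1 < s / q)).and <|
    (hSV.eventually_const_le (by norm_num : (1 / 2 : ℝ) < 1)).and (eventually_gt_atTop 0)
  refine ⟨X, (hX X le_rfl).2.2.2, 2 * K, by positivity, s, hq0.le.trans hqs.le, hs1,
    fun x hx => ?_⟩
  obtain ⟨hbound, hup, hlow, hx0⟩ := hX x hx
  have hLx := hLpos x hx0
  have hh : 0 < L x / x ^ ν := by positivity
  constructor
  · have hsplit : L (2 * x) / (2 * x) ^ ν = L (2 * x) / L x * q * (L x / x ^ ν) := by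
      rw [Real.mul_rpow zero_le_two hx0.le, hq, Real.rpow_neg zero_le_two]
      field_simp
    rw [hsplit]
    gcongr
    calc L (2 * x) / L x * q ≤ s / q * q := by gcongr
      _ = s := div_mul_cancel₀ s hq0.ne'
  · rw [← Real.log_div (hLpos _ (by positivity)).ne' hLx.ne']
    rw [Real.norm_eq_abs, Real.norm_of_nonneg hh.le] at hbound
    linarith [abs_log_le_two_mul_abs_sub_one_s11 hlow]

lemma exists_log_sub_isBigO (hν : 0 < ν) (hLpos : ∀ x, 0 < x → 0 < L x)
    (hLcont : ContinuousOn L (Set.Ioi 0))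
    (hSV : ∀ l, 0 < l → Tendsto (fun x => L (l * x) / L x) atTop (𝓝 1))
    (hO : (fun x => L (2 * x) / L x - 1) =O[atTop] (fun x => L x / x ^ ν)) :
    ∃ c, (fun x => Real.log (L x) - c) =O[atTop] (fun x => x ^ (-ν)) := by
  obtain ⟨X, hX0, K, hK0, s, hs0, hs1, hdoub⟩ :=
    exists_doubling_bounds hν hLpos (hSV 2 two_pos) hO
  set h : ℝ → ℝ := fun x => L x / x ^ ν
  have hIcc : Set.Icc X (2 * X) ⊆ Set.Ioi 0 := fun x hx => hX0.trans_le hx.1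
  obtain ⟨M, hM⟩ := isCompact_Icc.bddAbove_image <|
    (hLcont.mono hIcc).div ((continuousOn_id.rpow_const fun _ _ => Or.inr hν.le).mono hIcc)
      fun x hx => (Real.rpow_pos_of_pos (hIcc hx) ν).ne'
  have hhM : ∀ x, X ≤ x → h x ≤ max M 0 :=
    fun x hx => le_of_doubling_of_le_on_Icc hX0 hs0 hs1.le (le_max_right M 0)
      (fun y hy => (hdoub y hy).1) (fun y hy => (hM ⟨y, hy, rfl⟩).trans (le_max_left M 0)) hx
  obtain ⟨c, hc⟩ := exists_abs_sub_le_of_doubling (f := fun x => Real.log (L x))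
    (φ := fun x => K * h x) hX0 hs0 hs1 (fun x hx => (hdoub x hx).2)
    (fun x hx => by
      show K * h (2 * x) ≤ s * (K * h x)
      rw [mul_left_comm]
      exact mul_le_mul_of_nonneg_left (hdoub x hx).1 hK0)
    (fun l hl => tendsto_log_comp_mul_sub_log hLpos hl (hSV l hl))
  set B := Real.exp (c + K * max M 0 / (1 - s))
  have hLB : ∀ x, X ≤ x → L x ≤ B := by
    intro x hx
    rw [← Real.exp_log (hLpos x (hX0.trans_le hx)), Real.exp_le_exp]
    have := (abs_le.1 (hc x hx)).2
    have : K * h x / (1 - s) ≤ K * max M 0 / (1 - s) := by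
      gcongr
      exact hhM x hx
    linarith
  refine ⟨c, IsBigO.of_bound (K * B / (1 - s)) ?_⟩
  filter_upwards [eventually_ge_atTop X] with x hx
  have hx0 : 0 < x := hX0.trans_le hx
  rw [Real.norm_eq_abs, Real.norm_of_nonneg (Real.rpow_nonneg hx0.le _)]
  calc |Real.log (L x) - c| ≤ K * h x / (1 - s) := hc x hx
    _ = K * L x * x ^ (-ν) / (1 - s) := by
      simp only [h, Real.rpow_neg hx0.le, div_eq_mul_inv]; ring
    _ ≤ K * B * x ^ (-ν) / (1 - s) := by
      gcongr
      exact hLB x hx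
    _ = K * B / (1 - s) * x ^ (-ν) := by ring

lemma isBigO_ratio_sub_one_of_isBigO_sub (hLpos : ∀ x, 0 < x → 0 < L x) {C : ℝ} (hC : 0 < C)
    (hL : Tendsto L atTop (𝓝 C)) (hO : (fun x => L x - C) =O[atTop] (fun x => x ^ (-ν)))
    {l : ℝ} (hl : 0 < l) :
    (fun x => L (l * x) / L x - 1) =O[atTop] (fun x => L x / x ^ ν) := by
  have hinv : (fun x => (L x)⁻¹) =O[atTop] (fun _ => (1 : ℝ)) := (hL.inv₀ hC.ne').isBigO_one ℝ
  have hscaled : (fun x => L (l * x) - C) =O[atTop] (fun x => x ^ (-ν)) := by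
    refine (hO.comp_tendsto (tendsto_id.const_mul_atTop hl)).trans ?_
    refine (isBigO_const_mul_self (l ^ (-ν)) _ atTop).congr' ?_ EventuallyEq.rfl
    filter_upwards [eventually_gt_atTop 0] with x hx
    exact (Real.mul_rpow hl.le hx.le).symm
  have hdiff : (fun x => L (l * x) - L x) =O[atTop] (fun x => x ^ (-ν)) :=
    (hscaled.sub hO).congr_left fun x => by ring
  have hpow : (fun x => x ^ (-ν)) =O[atTop] (fun x => L x / x ^ ν) := by
    refine (hinv.mul (isBigO_refl (fun x => L x / x ^ ν) atTop)).congr' ?_ (by simp)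
    filter_upwards [eventually_gt_atTop 0] with x hx
    rw [Real.rpow_neg hx.le]
    field_simp [(hLpos x hx).ne']
  refine ((hdiff.mul hinv).congr' ?_ (by simp)).trans hpow
  filter_upwards [eventually_gt_atTop 0] with x hx
  field_simp [(hLpos x hx).ne']

end SlowlyVarying

theorem stmt_11
    (ν : ℝ) (hν : ν ∈ Set.Ioo (0 : ℝ) 1)
    (L : ℝ → ℝ) (hLpos : ∀ x : ℝ, 0 < x → 0 < L x)
    (hLcont : ContinuousOn L (Set.Ioi (0 : ℝ)))
    (hSV : ∀ l : ℝ, 0 < l →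
      Filter.Tendsto (fun x => L (l * x) / L x) Filter.atTop (𝓝 1)) :
    (∀ l : ℝ, 0 < l →
        (fun x => L (l * x) / L x - 1) =O[Filter.atTop] (fun x => L x / x ^ ν)) ↔
      (∃ Cₗ : ℝ, 0 < Cₗ ∧ Filter.Tendsto L Filter.atTop (𝓝 Cₗ) ∧
        (fun x => L x - Cₗ) =O[Filter.atTop] (fun x : ℝ => x ^ (-ν))) := by
  refine ⟨fun hO => ?_, fun ⟨C, hC, hL, hO⟩ l hl =>
    isBigO_ratio_sub_one_of_isBigO_sub hLpos hC hL hO hl⟩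
  obtain ⟨c, hc⟩ := exists_log_sub_isBigO hν.1 hLpos hLcont hSV (hO 2 two_pos)
  have hlog : Tendsto (fun x => Real.log (L x)) atTop (𝓝 c) :=
    tendsto_sub_nhds_zero_iff.1 (hc.trans_tendsto (tendsto_rpow_neg_atTop hν.1))
  have hexp_log : (fun x => Real.exp (Real.log (L x))) =ᶠ[atTop] L := by
    filter_upwards [eventually_gt_atTop 0] with x hx
    exact Real.exp_log (hLpos x hx)
  refine ⟨Real.exp c, Real.exp_pos c,
    ((Real.continuous_exp.tendsto c).comp hlog).congr' hexp_log, ?_⟩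
  refine (((Real.hasDerivAt_exp c).isBigO_sub.comp_tendsto hlog).congr' ?_
    EventuallyEq.rfl).trans hc
  filter_upwards [hexp_log] with x hx
  simp [hx]
end
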